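/- arXiv:1210.5916 — 2 statements merged into one kernel-verified Lean document; each statement's English description precedes it below -/
import Mathlib

section
/- Kronecker's theorem on unitary lattice automorphisms: a subgroup G of GL(n, ℂ) that preserves both a positive-definite Hermitian form and a full-rank lattice (a finitely generated subgroup of ℂⁿ spanning ℂⁿ over ℂ, preserved setwise by G) is finite. -/
/-!
The function `v ↦ Re (vᴴ B v)` is continuous, positive away from `0` and homogeneous of degree
two, hence bounded below by a positive multiple of `‖v‖²`; its sublevel sets are therefore
bounded, and meet the discrete lattice `L` in finite sets. Every `g ∈ G` preserves this function
and `L`, so it maps a finite generating set `S` of `L` into one such finite set `T`. Since `S`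
spans `ℂⁿ`, `g` is determined by its restriction `S → T`, and there are finitely many of those.
-/

open scoped Matrix ComplexOrder

open Bornology Metric Set

theorem exists_pos_mul_norm_sq_le_of_homogeneous {𝕜 E : Type*} [RCLike 𝕜]
    [NormedAddCommGroup E] [NormedSpace 𝕜 E] [ProperSpace E] {f : E → ℝ} (hf : Continuous f)
    (hpos : ∀ v ≠ 0, 0 < f v) (hsmul : ∀ (r : 𝕜) v, f (r • v) = ‖r‖ ^ 2 * f v) :
    ∃ m > 0, ∀ v, m * ‖v‖ ^ 2 ≤ f v := by
  have hf0 : f 0 = 0 := by simpa using hsmul 0 0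
  rcases subsingleton_or_nontrivial E with hE | hE
  · exact ⟨1, one_pos, fun v => by simp [Subsingleton.elim v 0, hf0]⟩
  let _ : NormedSpace ℝ E := NormedSpace.restrictScalars ℝ 𝕜 E
  obtain ⟨x₀, hx₀, hmin⟩ := (isCompact_sphere (0 : E) 1).exists_isMinOn
    (NormedSpace.sphere_nonempty.2 zero_le_one) hf.continuousOn
  refine ⟨f x₀, hpos x₀ (ne_zero_of_mem_unit_sphere ⟨x₀, hx₀⟩), fun v => ?_⟩
  rcases eq_or_ne v 0 with rfl | hv
  · simp [hf0]
  have hnv : 0 < ‖v‖ := norm_pos_iff.2 hv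
  have hunit : ((‖v‖⁻¹ : ℝ) : 𝕜) • v ∈ sphere (0 : E) 1 := by
    simp [norm_smul, hnv.ne']
  have := hmin hunit
  rw [mem_ofPred_eq, hsmul, RCLike.norm_ofReal, abs_inv, abs_norm, inv_pow] at this
  calc f x₀ * ‖v‖ ^ 2 ≤ (‖v‖ ^ 2)⁻¹ * f v * ‖v‖ ^ 2 := by gcongr
    _ = f v := by field_simp

theorem isBounded_setOf_le_of_homogeneous {𝕜 E : Type*} [RCLike 𝕜]
    [NormedAddCommGroup E] [NormedSpace 𝕜 E] [ProperSpace E] {f : E → ℝ} (hf : Continuous f)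
    (hpos : ∀ v ≠ 0, 0 < f v) (hsmul : ∀ (r : 𝕜) v, f (r • v) = ‖r‖ ^ 2 * f v) (c : ℝ) :
    IsBounded {v | f v ≤ c} := by
  obtain ⟨m, hm, hle⟩ := exists_pos_mul_norm_sq_le_of_homogeneous hf hpos hsmul
  refine (isBounded_iff_subset_closedBall 0).2 ⟨√(c / m), fun v hv => ?_⟩
  rw [mem_closedBall_zero_iff, ← Real.sqrt_sq (norm_nonneg v)]
  exact Real.sqrt_le_sqrt ((le_div_iff₀' hm).2 ((hle v).trans hv))

namespace Matrix

variable {n 𝕜 : Type*} [Fintype n] [RCLike 𝕜]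

def reQuadForm (B : Matrix n n 𝕜) (v : n → 𝕜) : ℝ := RCLike.re (star v ⬝ᵥ B *ᵥ v)

theorem continuous_reQuadForm (B : Matrix n n 𝕜) : Continuous B.reQuadForm := by
  unfold reQuadForm; fun_prop

theorem reQuadForm_smul (B : Matrix n n 𝕜) (r : 𝕜) (v : n → 𝕜) :
    B.reQuadForm (r • v) = ‖r‖ ^ 2 * B.reQuadForm v := by
  simp only [reQuadForm, star_smul, mulVec_smul, smul_dotProduct, dotProduct_smul, smul_eq_mul,
    ← mul_assoc, RCLike.star_def, RCLike.mul_conj]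
  exact_mod_cast RCLike.re_ofReal_mul _ _

theorem PosDef.reQuadForm_pos {B : Matrix n n 𝕜} (hB : B.PosDef) {v : n → 𝕜} (hv : v ≠ 0) :
    0 < B.reQuadForm v :=
  hB.re_dotProduct_pos hv

theorem reQuadForm_mulVec_of_conjTranspose_mul_mul {A B : Matrix n n 𝕜} (h : Aᴴ * B * A = B)
    (v : n → 𝕜) : B.reQuadForm (A *ᵥ v) = B.reQuadForm v := by
  rw [reQuadForm, star_mulVec, ← dotProduct_mulVec, mulVec_mulVec, mulVec_mulVec, h]
  rfl

theorem finite_setOf_mapsTo_mulVec {R : Type*} [CommRing R]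
    {S T : Set (n → R)} (hS : S.Finite) (hspan : Submodule.span R S = ⊤) (hT : T.Finite) :
    {A : Matrix n n R | MapsTo A.mulVec S T}.Finite := by
  have := hS.to_subtype
  have := hT.to_subtype
  refine Set.finite_coe_iff.1 <| Finite.of_injective
    (fun A : {A : Matrix n n R | MapsTo A.mulVec S T} => fun s : S => (⟨A.1 *ᵥ s, A.2 s.2⟩ : T))
    fun A A' hAA' => Subtype.ext <| mulVec_injective <| congrArg DFunLike.coe <|
      LinearMap.ext_on (f := A.1.mulVecLin) (g := A'.1.mulVecLin) hspan
        fun s hs => congrArg Subtype.val (congrFun hAA' ⟨s, hs⟩)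

end Matrix

/-- **Kronecker's theorem on unitary lattice automorphisms.**
A subgroup `G` of `GL(n, ℂ)` that preserves a positive-definite Hermitian form `B`
(i.e. `gᴴ B g = B` for all `g ∈ G`) and preserves setwise a full-rank lattice
`L ⊆ ℂⁿ` (a finitely generated, discrete additive subgroup spanning `ℂⁿ` over `ℂ`)
is finite. -/
theorem stmt_5 (n : ℕ) (G : Subgroup (Matrix.GeneralLinearGroup (Fin n) ℂ))
    (B : Matrix (Fin n) (Fin n) ℂ) (hB : B.PosDef)
    (hGB : ∀ g ∈ G, (g : Matrix (Fin n) (Fin n) ℂ)ᴴ * B * (g : Matrix (Fin n) (Fin n) ℂ) = B)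
    (L : AddSubgroup (Fin n → ℂ)) (hLfg : L.FG) (hLdisc : DiscreteTopology L)
    (hLspan : Submodule.span ℂ (L : Set (Fin n → ℂ)) = ⊤)
    (hGL : ∀ g ∈ G, (fun v => (g : Matrix (Fin n) (Fin n) ℂ).mulVec v) '' (L : Set (Fin n → ℂ))
      = (L : Set (Fin n → ℂ))) :
    Finite G := by
  obtain ⟨S, rfl⟩ := hLfg
  obtain ⟨c, hc⟩ := (S.image B.reQuadForm).exists_le
  set T := {v | B.reQuadForm v ≤ c} ∩ (AddSubgroup.closure (S : Set (Fin n → ℂ)) : Set _)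
  have hT : T.Finite :=
    finite_isBounded_inter_isClosed (isDiscrete_iff_discreteTopology.2 hLdisc)
      (isBounded_setOf_le_of_homogeneous B.continuous_reQuadForm (fun _ => hB.reQuadForm_pos)
        B.reQuadForm_smul c) AddSubgroup.isClosed_of_discrete
  have hspan : Submodule.span ℂ (S : Set (Fin n → ℂ)) = ⊤ := by
    rwa [← Submodule.span_int_eq_addSubgroupClosure, Submodule.coe_toAddSubgroup,
      Submodule.span_span_of_tower] at hLspan
  have hmaps : ∀ g ∈ G, MapsTo (g : Matrix (Fin n) (Fin n) ℂ).mulVec S T := by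
    intro g hg s hs
    refine ⟨?_, hGL g hg ▸ mem_image_of_mem _ (AddSubgroup.subset_closure hs)⟩
    rw [mem_ofPred_eq, Matrix.reQuadForm_mulVec_of_conjTranspose_mul_mul (hGB g hg)]
    exact hc _ (Finset.mem_image_of_mem _ hs)
  have := (Matrix.finite_setOf_mapsTo_mulVec S.finite_toSet hspan hT).to_subtype
  exact Finite.of_injective
    (fun g : G => (⟨((g : GL (Fin n) ℂ) : Matrix (Fin n) (Fin n) ℂ), hmaps g g.2⟩ :
      {A : Matrix (Fin n) (Fin n) ℂ | MapsTo A.mulVec S T}))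
    fun g h hgh => Subtype.ext (Units.ext (congrArg Subtype.val hgh))
end

section
/- Every algebraic complex number all of whose Galois conjugates have absolute value 1 and which is an algebraic integer is a root of unity (Kronecker's theorem). -/
/-! The complex embeddings of the number field `ℚ(α)` send `α` exactly to its conjugates, so all
of them have absolute value `1` at `α`, and so at every power of `α`. Powers of `α` are algebraic
integers of `ℚ(α)` with bounded conjugates, of which there are only finitely many; hence two of
them coincide and `α` is a root of unity
(`NumberField.Embeddings.pow_eq_one_of_norm_eq_one`). -/

open Polynomial IntermediateField NumberField

theorem IntermediateField.isIntegral_coe_iff {R F E : Type*} [CommRing R] [Field F] [Field E]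
    [Algebra R F] [Algebra R E] [Algebra F E] [IsScalarTower R F E] {L : IntermediateField F E}
    {x : L} : IsIntegral R (x : E) ↔ IsIntegral R x :=
  isIntegral_algHom_iff (L.val.restrictScalars R) L.val.injective

theorem NumberField.Embeddings.aeval_minpoly_apply {K : Type*} [Field K] [NumberField K]
    (φ : K →+* ℂ) (x : K) : aeval (φ x) (minpoly ℚ x) = 0 := by
  have hroot : φ x ∈ (minpoly ℚ x).rootSet ℂ :=
    range_eval_eq_rootSet_minpoly K ℂ x ▸ ⟨φ, rfl⟩
  exact (mem_rootSet.mp hroot).2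

theorem NumberField.exists_pow_eq_one_of_forall_root_minpoly_norm_eq_one {K : Type*} [Field K]
    [NumberField K] {x : K} (hxi : IsIntegral ℤ x)
    (hx : ∀ β : ℂ, aeval β (minpoly ℚ x) = 0 → ‖β‖ = 1) :
    ∃ n : ℕ, 0 < n ∧ x ^ n = 1 := by
  obtain ⟨n, hn, hpow⟩ := Embeddings.pow_eq_one_of_norm_eq_one K ℂ hxi
    fun φ ↦ hx _ (Embeddings.aeval_minpoly_apply φ x)
  exact ⟨n, hn, hpow⟩

/-- **Kronecker's theorem.** An algebraic integer `α ∈ ℂ` all of whose Galois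
conjugates (the complex roots of its minimal polynomial over `ℚ`) have absolute
value `1` is a root of unity. -/
theorem stmt_6 (α : ℂ) (hint : IsIntegral ℤ α)
    (hconj : ∀ β : ℂ, Polynomial.aeval β (minpoly ℚ α) = 0 → ‖β‖ = 1) :
    ∃ n : ℕ, 0 < n ∧ α ^ n = 1 := by
  have : FiniteDimensional ℚ ℚ⟮α⟯ := adjoin.finiteDimensional hint.tower_top
  have : NumberField ℚ⟮α⟯ := ⟨⟩
  obtain ⟨n, hn, hpow⟩ :=
    exists_pow_eq_one_of_forall_root_minpoly_norm_eq_one (x := AdjoinSimple.gen ℚ α)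
      (isIntegral_coe_iff.mp hint) (minpoly_gen ℚ α ▸ hconj)
  exact ⟨n, hn, by simpa using congrArg (algebraMap ℚ⟮α⟯ ℂ) hpow⟩
end
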